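/- Let S and M be N×N real symmetric matrices with S𝟙 = 𝟙 and M𝟙 = 𝟙, and let J = 𝟙𝟙ᵀ/N. Then ‖S − J‖₂ ≤ (‖M − J‖₂)² + ‖S − M²‖₂. -/
import Mathlib


/-- The spectral norm (largest singular value) of a real square matrix, realized as the
operator norm of the induced continuous linear map on Euclidean space. -/
noncomputable def specNorm {N : ℕ} (M : Matrix (Fin N) (Fin N) ℝ) : ℝ :=
  ‖Matrix.toEuclideanCLM (𝕜 := ℝ) M‖

lemma specNorm_add_le {N : ℕ} (A B : Matrix (Fin N) (Fin N) ℝ) :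
    specNorm (A + B) ≤ specNorm A + specNorm B := by
  simp only [specNorm, map_add]; exact norm_add_le _ _

lemma specNorm_mul_le {N : ℕ} (A B : Matrix (Fin N) (Fin N) ℝ) :
    specNorm (A * B) ≤ specNorm A * specNorm B := by
  simp only [specNorm, map_mul]; exact norm_mul_le _ _

lemma specNorm_nonneg {N : ℕ} (A : Matrix (Fin N) (Fin N) ℝ) : 0 ≤ specNorm A :=
  norm_nonneg _

/-- For real symmetric `S`, `M` with `S𝟙 = 𝟙`, `M𝟙 = 𝟙`, and `J = 𝟙𝟙ᵀ/N`,
`‖S − J‖₂ ≤ (‖M − J‖₂)² + ‖S − M²‖₂`. -/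
theorem stmt_9 (N : ℕ) (S M : Matrix (Fin N) (Fin N) ℝ)
    (hSsymm : S.IsSymm) (hMsymm : M.IsSymm)
    (hSrow : S.mulVec (fun _ => 1) = fun _ => 1)
    (hMrow : M.mulVec (fun _ => 1) = fun _ => 1)
    (J : Matrix (Fin N) (Fin N) ℝ) (hJ : ∀ i j, J i j = 1 / N) :
    specNorm (S - J) ≤ (specNorm (M - J)) ^ 2 + specNorm (S - M ^ 2) := by
  have hrowsum : ∀ i, (∑ k, M i k) = 1 := by
    intro i
    have := congrFun hMrow i
    simpa [Matrix.mulVec, dotProduct] using this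
  have hMJ : M * J = J := by
    ext i j
    simp only [Matrix.mul_apply, hJ]
    rw [← Finset.sum_mul, hrowsum, one_mul]
  have hJM : J * M = J := by
    ext i j
    simp only [Matrix.mul_apply, hJ]
    have hcol : (∑ k, M k j) = 1 := by
      have := hrowsum j
      calc (∑ k, M k j) = ∑ k, M j k := by
            refine Finset.sum_congr rfl fun k _ => ?_
            have := congrFun (congrFun hMsymm.eq k) j
            simpa [Matrix.transpose_apply] using this.symm
        _ = 1 := hrowsum j
    rw [← Finset.mul_sum, hcol, mul_one]
  have hJJ : J * J = J := by
    ext i j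
    simp only [Matrix.mul_apply, hJ]
    rcases Nat.eq_zero_or_pos N with h0 | hpos
    · subst h0; simp
    · rw [Finset.sum_const, Finset.card_univ, Fintype.card_fin, nsmul_eq_mul]
      field_simp
  have hsq : (M - J) ^ 2 = M ^ 2 - J := by
    have : (M - J) * (M - J) = M * M - M * J - J * M + J * J := by noncomm_ring
    rw [sq, this, hMJ, hJM, hJJ, sq]
    abel
  have key : S - J = (S - M ^ 2) + (M - J) * (M - J) := by
    rw [← sq, hsq]; abel
  calc specNorm (S - J) = specNorm ((S - M ^ 2) + (M - J) * (M - J)) := by rw [← key]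
    _ ≤ specNorm (S - M ^ 2) + specNorm ((M - J) * (M - J)) := specNorm_add_le _ _
    _ ≤ specNorm (S - M ^ 2) + specNorm (M - J) * specNorm (M - J) := by
        linarith [specNorm_mul_le (M - J) (M - J)]
    _ = (specNorm (M - J)) ^ 2 + specNorm (S - M ^ 2) := by ring
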